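/- Let A be an additively written abelian group generated by three elements a, b, c (i.e., the subgroup generated by {a, b, c} equals A). Suppose a + b + c = 0, and suppose additionally that ε·a + δ·b + ζ·c = 0 for some signs ε, δ, ζ ∈ {1, −1} which are not all equal. Then A is not isomorphic to (ℤ/3ℤ) × (ℤ/3ℤ). -/
import Mathlib

private lemma z33_not_cyclic (z : ZMod 3 × ZMod 3) :
    ¬ ∀ y : ZMod 3 × ZMod 3, ∃ m : ZMod 3, m • z = y := by
  revert z; decide

private lemma z33_two_torsion (y : ZMod 3 × ZMod 3) (h : y + y = 0) : y = 0 := by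
  revert h; revert y; decide

private lemma cyclic_aux {A : Type*} [AddCommGroup A] (a b c g : A)
    (hgen : AddSubgroup.closure ({a, b, c} : Set A) = ⊤)
    (hg : ∀ t ∈ ({a, b, c} : Set A), t ∈ AddSubgroup.zmultiples g) :
    ¬ Nonempty (A ≃+ ZMod 3 × ZMod 3) := by
  rintro ⟨e⟩
  have htop : (⊤ : AddSubgroup A) ≤ AddSubgroup.zmultiples g := by
    rw [← hgen]
    exact AddSubgroup.closure_le _ |>.mpr hg
  apply z33_not_cyclic (e g)
  intro y
  obtain ⟨x, hx⟩ := e.surjective y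
  obtain ⟨n, hn⟩ := htop (AddSubgroup.mem_top x)
  have hn' : n • g = x := hn
  refine ⟨(n : ZMod 3), ?_⟩
  rw [Int.cast_smul_eq_zsmul, ← map_zsmul e, hn', hx]

private lemma main_aux {A : Type*} [AddCommGroup A] (a b c x : A)
    (hgen : AddSubgroup.closure ({a, b, c} : Set A) = ⊤)
    (h1 : a + b + c = 0)
    (hx : x = a ∨ x = b ∨ x = c) (h2 : x + x = 0) :
    ¬ Nonempty (A ≃+ ZMod 3 × ZMod 3) := by
  intro ⟨e⟩
  have hx0 : x = 0 := by
    apply e.injective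
    rw [map_zero]
    apply z33_two_torsion
    rw [← map_add, h2, map_zero]
  rcases hx with h | h | h
  · -- a = 0, so c = -b, generator b
    have ha0 : a = 0 := h ▸ hx0
    refine cyclic_aux a b c b hgen ?_ ⟨e⟩
    intro t ht
    simp only [Set.mem_insert_iff, Set.mem_singleton_iff] at ht
    rcases ht with h' | h' | h'
    · rw [h', ha0]; exact zero_mem _
    · rw [h']; exact AddSubgroup.mem_zmultiples b
    · have hc : c = -b := by
        rw [ha0, zero_add] at h1
        exact eq_neg_of_add_eq_zero_right h1
      rw [h', hc]; exact neg_mem (AddSubgroup.mem_zmultiples b)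
  · -- b = 0, c = -a
    have hb0 : b = 0 := h ▸ hx0
    refine cyclic_aux a b c a hgen ?_ ⟨e⟩
    intro t ht
    simp only [Set.mem_insert_iff, Set.mem_singleton_iff] at ht
    rcases ht with h' | h' | h'
    · rw [h']; exact AddSubgroup.mem_zmultiples a
    · rw [h', hb0]; exact zero_mem _
    · have hc : c = -a := by
        rw [hb0, add_zero] at h1
        exact eq_neg_of_add_eq_zero_right h1
      rw [h', hc]; exact neg_mem (AddSubgroup.mem_zmultiples a)
  · -- c = 0, b = -a
    have hc0 : c = 0 := h ▸ hx0
    refine cyclic_aux a b c a hgen ?_ ⟨e⟩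
    intro t ht
    simp only [Set.mem_insert_iff, Set.mem_singleton_iff] at ht
    rcases ht with h' | h' | h'
    · rw [h']; exact AddSubgroup.mem_zmultiples a
    · have hb : b = -a := by
        rw [hc0, add_zero] at h1
        exact eq_neg_of_add_eq_zero_right h1
      rw [h', hb]; exact neg_mem (AddSubgroup.mem_zmultiples a)
    · rw [h', hc0]; exact zero_mem _

/-- An abelian group generated by three elements `a, b, c` satisfying
`a + b + c = 0` and a second sign relation `ε·a + δ·b + ζ·c = 0` with
`ε, δ, ζ ∈ {1, −1}` not all equal is not isomorphic to `ℤ/3 × ℤ/3`. -/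
theorem stmt_12 {A : Type*} [AddCommGroup A] (a b c : A)
    (hgen : AddSubgroup.closure ({a, b, c} : Set A) = ⊤)
    (h1 : a + b + c = 0)
    (ε δ ζ : ℤ)
    (hε : ε = 1 ∨ ε = -1) (hδ : δ = 1 ∨ δ = -1) (hζ : ζ = 1 ∨ ζ = -1)
    (hne : ¬ (ε = δ ∧ δ = ζ))
    (h2 : ε • a + δ • b + ζ • c = 0) :
    ¬ Nonempty (A ≃+ ZMod 3 × ZMod 3) := by
  rcases hε with rfl | rfl <;> rcases hδ with rfl | rfl <;> rcases hζ with rfl | rfl <;>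
    simp only [one_zsmul, neg_one_zsmul] at h2
  · exact absurd ⟨rfl, rfl⟩ hne
  · -- (1,1,-1): 2c = 0
    refine main_aux a b c c hgen h1 (Or.inr (Or.inr rfl)) ?_
    rw [show c + c = (a + b + c) - (a + b + -c) from by abel, h1, h2, sub_zero]
  · -- (1,-1,1): 2b = 0
    refine main_aux a b c b hgen h1 (Or.inr (Or.inl rfl)) ?_
    rw [show b + b = (a + b + c) - (a + -b + c) from by abel, h1, h2, sub_zero]
  · -- (1,-1,-1): 2a = 0
    refine main_aux a b c a hgen h1 (Or.inl rfl) ?_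
    rw [show a + a = (a + b + c) + (a + -b + -c) from by abel, h1, h2, add_zero]
  · -- (-1,1,1): 2a = 0
    refine main_aux a b c a hgen h1 (Or.inl rfl) ?_
    rw [show a + a = (a + b + c) - (-a + b + c) from by abel, h1, h2, sub_zero]
  · -- (-1,1,-1): 2b = 0
    refine main_aux a b c b hgen h1 (Or.inr (Or.inl rfl)) ?_
    rw [show b + b = (a + b + c) + (-a + b + -c) from by abel, h1, h2, add_zero]
  · -- (-1,-1,1): 2c = 0
    refine main_aux a b c c hgen h1 (Or.inr (Or.inr rfl)) ?_
    rw [show c + c = (a + b + c) + (-a + -b + c) from by abel, h1, h2, add_zero]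
  · exact absurd ⟨rfl, rfl⟩ hne
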